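/- Let n ∈ ℕ+, r = r(n), and 1 ≤ v ≤ r. The number of minimal monomial generators m of I_n with min(m) = v (i.e. whose minimal support index is v) equals the number of integers x with n/p_v < x ≤ n such that no prime factor of x is smaller than p_v; equivalently, it equals the number of solutions (b_v, …, b_r) in non-negative integers of the inequality log n − log p_v < ∑_{i=v}^r b_i log p_i ≤ log n. -/

import Mathlib

/-!
Let `K` be a field, `n ≥ 1`, `r = r(n)` the number of primes `≤ n`, and
`1 ≤ v ≤ r` (here `v : Fin r`, 0-indexed, with `x_v` corresponding to the
prime `p_v = Nat.nth Nat.Prime v`).  The number of minimal monomial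
generators `m` of `I_n` with minimal support index `v` equals the number of
integers `x` with `n/p_v < x ≤ n` having no prime factor smaller than `p_v`;
equivalently, it equals the number of solutions `(b_v, …, b_r)` in
non-negative integers of `log n − log p_v < ∑_{i ≥ v} b_i log p_i ≤ log n`.
-/

/-- The weight `p_1^{a_1}⋯p_r^{a_r}` of the exponent vector `a` (0-indexed:
the variable `x_i` corresponds to the `i`-th prime `Nat.nth Nat.Prime i`,
with `Nat.nth Nat.Prime 0 = 2`). -/
noncomputable def weight {r : ℕ} (d : Fin r →₀ ℕ) : ℕ :=
  ∏ i : Fin r, (Nat.nth Nat.Prime (i : ℕ)) ^ d i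

lemma prime_nth (i : ℕ) : (Nat.nth Nat.Prime i).Prime :=
  Nat.nth_mem_of_infinite Nat.infinite_setOf_prime i

lemma one_le_weight {r : ℕ} (d : Fin r →₀ ℕ) : 1 ≤ weight d :=
  Finset.one_le_prod' fun i _ => Nat.one_le_pow _ _ (prime_nth i).pos

lemma weight_mono {r : ℕ} {d e : Fin r →₀ ℕ} (h : d ≤ e) : weight d ≤ weight e :=
  Finset.prod_le_prod' fun i _ => Nat.pow_le_pow_right (prime_nth i).pos (h i)

lemma weight_add {r : ℕ} (d e : Fin r →₀ ℕ) : weight (d + e) = weight d * weight e := by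
  simp [weight, pow_add, Finset.prod_mul_distrib]

lemma weight_single {r : ℕ} (j : Fin r) :
    weight (Finsupp.single j 1) = Nat.nth Nat.Prime (j : ℕ) := by
  simp [weight, Finsupp.single_apply, pow_ite]

lemma factorization_weight {r : ℕ} (d : Fin r →₀ ℕ) (i : Fin r) :
    (weight d).factorization (Nat.nth Nat.Prime (i : ℕ)) = d i := by
  classical
  rw [weight, Nat.factorization_prod
    (g := fun j : Fin r => Nat.nth Nat.Prime (j : ℕ) ^ d j)
    (fun j _ => (pow_pos (prime_nth (j : ℕ)).pos _).ne')]
  rw [Finsupp.finset_sum_apply]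
  rw [Finset.sum_eq_single i]
  · rw [Nat.Prime.factorization_pow (prime_nth _), Finsupp.single_eq_same]
  · intro j _ hji
    rw [Nat.Prime.factorization_pow (prime_nth _), Finsupp.single_eq_of_ne']
    exact fun h => hji (Fin.ext (Nat.nth_injective Nat.infinite_setOf_prime h))
  · simp

lemma weight_injective {r : ℕ} : Function.Injective (weight (r := r)) := by
  intro d e h
  ext i
  rw [← factorization_weight d i, ← factorization_weight e i, h]

lemma prime_dvd_weight {r : ℕ} {d : Fin r →₀ ℕ} {q : ℕ} (hq : q.Prime)
    (hdvd : q ∣ weight d) : ∃ i : Fin r, 0 < d i ∧ q = Nat.nth Nat.Prime (i : ℕ) := by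
  rw [weight] at hdvd
  obtain ⟨i, -, hi⟩ := hq.prime.exists_mem_finset_dvd hdvd
  have hq' : q = Nat.nth Nat.Prime (i : ℕ) :=
    (Nat.prime_dvd_prime_iff_eq hq (prime_nth _)).1 (hq.dvd_of_dvd_pow hi)
  refine ⟨i, ?_, hq'⟩
  rcases Nat.eq_zero_or_pos (d i) with h0 | h0
  · rw [h0, pow_zero, Nat.dvd_one] at hi
    exact absurd hi hq.one_lt.ne'
  · exact h0

lemma weight_factorization (n : ℕ) {x : ℕ} (hx : x ≠ 0) (hxn : x ≤ n) :
    weight (Finsupp.equivFunOnFinite.symm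
      (fun i : Fin n.primeCounting => x.factorization (Nat.nth Nat.Prime (i : ℕ)))) = x := by
  set b := Finsupp.equivFunOnFinite.symm
      (fun i : Fin n.primeCounting => x.factorization (Nat.nth Nat.Prime (i : ℕ))) with hb
  have hbapp : ∀ i, b i = x.factorization (Nat.nth Nat.Prime (i : ℕ)) := fun i => rfl
  refine Nat.eq_of_factorization_eq (Nat.one_le_iff_ne_zero.1 (one_le_weight b)) hx fun q => ?_
  by_cases hq : q.Prime
  · by_cases hqn : q ≤ n
    · have hcount : Nat.count Nat.Prime q < n.primeCounting := by
        rw [Nat.primeCounting, Nat.primeCounting']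
        exact Nat.count_strict_mono hq (Nat.lt_succ_of_le hqn)
      set i : Fin n.primeCounting := ⟨Nat.count Nat.Prime q, hcount⟩ with hi
      have hnth : Nat.nth Nat.Prime (i : ℕ) = q := Nat.nth_count hq
      rw [← hnth, factorization_weight, hbapp]
    · rw [Nat.factorization_eq_zero_of_not_dvd (fun hdvd =>
        hqn (le_trans (Nat.le_of_dvd (Nat.pos_of_ne_zero hx) hdvd) hxn))]
      refine Nat.factorization_eq_zero_of_not_dvd fun hdvd => ?_
      obtain ⟨i, hi, rfl⟩ := prime_dvd_weight hq hdvd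
      rw [hbapp] at hi
      have : Nat.nth Nat.Prime (i : ℕ) ∣ x := Nat.dvd_of_factorization_pos hi.ne'
      exact hqn (le_trans (Nat.le_of_dvd (Nat.pos_of_ne_zero hx) this) hxn)
  · rw [Nat.factorization_eq_zero_of_not_prime _ hq, Nat.factorization_eq_zero_of_not_prime _ hq]

/-- The monomial ideal `I_n` of `K[x_1, …, x_r]` generated by all monomials of
weight `> n`. -/
noncomputable def truncIdeal (K : Type*) [Field K] (n r : ℕ) : Ideal (MvPolynomial (Fin r) K) :=
  Ideal.span {m | ∃ d : Fin r →₀ ℕ, n < weight d ∧ m = MvPolynomial.monomial d (1 : K)}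

/-- `d` is the exponent vector of a minimal monomial generator of `I_n`. -/
def IsMinGen (K : Type*) [Field K] (n r : ℕ) (d : Fin r →₀ ℕ) : Prop :=
  MvPolynomial.monomial d (1 : K) ∈ truncIdeal K n r ∧
    ∀ j : Fin r, 0 < d j →
      MvPolynomial.monomial (d - Finsupp.single j 1) (1 : K) ∉ truncIdeal K n r

lemma monomial_mem_truncIdeal (K : Type*) [Field K] (n r : ℕ) (d : Fin r →₀ ℕ) :
    MvPolynomial.monomial d (1 : K) ∈ truncIdeal K n r ↔ n < weight d := by
  have hset : {m | ∃ e : Fin r →₀ ℕ, n < weight e ∧ m = MvPolynomial.monomial e (1 : K)}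
      = (fun e : Fin r →₀ ℕ => MvPolynomial.monomial e (1 : K)) '' {e | n < weight e} := by
    ext m
    constructor
    · rintro ⟨e, he, rfl⟩; exact ⟨e, he, rfl⟩
    · rintro ⟨e, he, rfl⟩; exact ⟨e, he, rfl⟩
  rw [truncIdeal, hset, MvPolynomial.mem_ideal_span_monomial_image]
  constructor
  · intro h
    obtain ⟨e, he, hle⟩ := by
      simpa using h d (by
        classical
        rw [MvPolynomial.support_monomial, if_neg (one_ne_zero (α := K))]
        exact Finset.mem_singleton_self d)
    exact he.trans_le (weight_mono hle)
  · intro h xi hxi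
    have : xi = d :=
      Finset.mem_singleton.1 (MvPolynomial.support_monomial_subset hxi)
    exact ⟨d, h, this.ge⟩

lemma nth_mul_weight_sub {r : ℕ} (d : Fin r →₀ ℕ) (k : Fin r) (hk : 0 < d k) :
    Nat.nth Nat.Prime (k : ℕ) * weight (d - Finsupp.single k 1) = weight d := by
  have hle : Finsupp.single k 1 ≤ d := Finsupp.single_le_iff.2 hk
  have hd : d - Finsupp.single k 1 + Finsupp.single k 1 = d := tsub_add_cancel_of_le hle
  calc Nat.nth Nat.Prime (k : ℕ) * weight (d - Finsupp.single k 1)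
      = weight (d - Finsupp.single k 1 + Finsupp.single k 1) := by
        rw [weight_add, weight_single, mul_comm]
    _ = weight d := by rw [hd]

lemma isMinGen_iff (K : Type*) [Field K] (n : ℕ) {r : ℕ} {v : Fin r} (d : Fin r →₀ ℕ)
    (hv : 0 < d v) (h0 : ∀ i, i < v → d i = 0) :
    IsMinGen K n r d ↔ n < weight d ∧ weight (d - Finsupp.single v 1) ≤ n := by
  constructor
  · rintro ⟨hmem, hmin⟩
    refine ⟨(monomial_mem_truncIdeal K n r d).1 hmem, ?_⟩
    have := hmin v hv
    rw [monomial_mem_truncIdeal] at this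
    exact not_lt.1 this
  · rintro ⟨h1, h2⟩
    refine ⟨(monomial_mem_truncIdeal K n r d).2 h1, fun j hj => ?_⟩
    rw [monomial_mem_truncIdeal, not_lt]
    have hvj : v ≤ j := le_of_not_gt fun h => hj.ne' (h0 j h)
    have hpv : Nat.nth Nat.Prime (v : ℕ) ≤ Nat.nth Nat.Prime (j : ℕ) :=
      (Nat.nth_le_nth Nat.infinite_setOf_prime).2 hvj
    have h3 : Nat.nth Nat.Prime (v : ℕ) * weight (d - Finsupp.single j 1)
        ≤ Nat.nth Nat.Prime (v : ℕ) * weight (d - Finsupp.single v 1) := by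
      rw [nth_mul_weight_sub d v hv, ← nth_mul_weight_sub d j hj]
      exact Nat.mul_le_mul_right _ hpv
    exact (Nat.le_of_mul_le_mul_left h3 (prime_nth (v : ℕ)).pos).trans h2

theorem truncIdeal_count_minimal_generators_minSupport
    (K : Type*) [Field K] (n : ℕ) (hn : 1 ≤ n)
    (v : Fin (Nat.primeCounting n)) :
    Set.ncard {d : Fin (Nat.primeCounting n) →₀ ℕ |
        IsMinGen K n (Nat.primeCounting n) d ∧ 0 < d v ∧ ∀ i < v, d i = 0}
      = Set.ncard {x : ℕ |
          (n : ℚ) / (Nat.nth Nat.Prime (v : ℕ)) < (x : ℚ) ∧ x ≤ n ∧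
          ∀ q : ℕ, q.Prime → q ∣ x → Nat.nth Nat.Prime (v : ℕ) ≤ q} ∧
    Set.ncard {x : ℕ |
        (n : ℚ) / (Nat.nth Nat.Prime (v : ℕ)) < (x : ℚ) ∧ x ≤ n ∧
        ∀ q : ℕ, q.Prime → q ∣ x → Nat.nth Nat.Prime (v : ℕ) ≤ q}
      = Set.ncard {b : Fin (Nat.primeCounting n) →₀ ℕ |
          (∀ i < v, b i = 0) ∧
          Real.log n - Real.log (Nat.nth Nat.Prime (v : ℕ)) <
            ∑ i, (b i : ℝ) * Real.log (Nat.nth Nat.Prime (i : ℕ)) ∧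
          ∑ i, (b i : ℝ) * Real.log (Nat.nth Nat.Prime (i : ℕ)) ≤ Real.log n} := by
  classical
  have hpvpos : 0 < Nat.nth Nat.Prime (v : ℕ) := (prime_nth _).pos
  set B0 : Set (Fin (Nat.primeCounting n) →₀ ℕ) :=
    {b | (∀ i < v, b i = 0) ∧ n < Nat.nth Nat.Prime (v : ℕ) * weight b ∧ weight b ≤ n}
    with hB0
  -- the set of minimal generators with min support v
  have hset1 : {d : Fin (Nat.primeCounting n) →₀ ℕ |
      IsMinGen K n (Nat.primeCounting n) d ∧ 0 < d v ∧ ∀ i < v, d i = 0}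
      = (fun b => b + Finsupp.single v 1) '' B0 := by
    ext d
    constructor
    · rintro ⟨hgen, hv', h0⟩
      have hle : Finsupp.single v 1 ≤ d := Finsupp.single_le_iff.2 hv'
      have hchar := (isMinGen_iff K n d hv' h0).1 hgen
      refine ⟨d - Finsupp.single v 1, ⟨?_, ?_, hchar.2⟩, tsub_add_cancel_of_le hle⟩
      · intro i hi
        rw [Finsupp.tsub_apply, h0 i hi]
        simp
      · rw [nth_mul_weight_sub d v hv']
        exact hchar.1
    · rintro ⟨b, ⟨hb0, hb1, hb2⟩, rfl⟩
      have hv' : 0 < (b + Finsupp.single v 1 : Fin n.primeCounting →₀ ℕ) v := by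
        rw [Finsupp.add_apply, Finsupp.single_eq_same]; omega
      have h0 : ∀ i, i < v → (b + Finsupp.single v 1 : Fin n.primeCounting →₀ ℕ) i = 0 := by
        intro i hi
        rw [Finsupp.add_apply, hb0 i hi, Finsupp.single_eq_of_ne' hi.ne']
        simp
      have hsub : b + Finsupp.single v 1 - Finsupp.single v 1 = b := by
        ext i
        rw [Finsupp.tsub_apply, Finsupp.add_apply]
        omega
      refine ⟨(isMinGen_iff K n _ hv' h0).2 ⟨?_, ?_⟩, hv', h0⟩
      · rw [weight_add, weight_single, mul_comm]
        exact hb1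
      · rw [hsub]
        exact hb2
  -- the set of integers x
  have hsetX : {x : ℕ |
      (n : ℚ) / (Nat.nth Nat.Prime (v : ℕ)) < (x : ℚ) ∧ x ≤ n ∧
      ∀ q : ℕ, q.Prime → q ∣ x → Nat.nth Nat.Prime (v : ℕ) ≤ q}
      = weight '' B0 := by
    ext x
    constructor
    · rintro ⟨hq1, hq2, hq3⟩
      have hx0 : x ≠ 0 := by
        have hpos : (0 : ℚ) < (n : ℚ) / (Nat.nth Nat.Prime (v : ℕ)) :=
          div_pos (by exact_mod_cast hn) (by exact_mod_cast hpvpos)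
        have : (0 : ℚ) < (x : ℚ) := hpos.trans hq1
        exact_mod_cast this.ne'
      refine ⟨Finsupp.equivFunOnFinite.symm
        (fun i : Fin n.primeCounting => x.factorization (Nat.nth Nat.Prime (i : ℕ))),
        ⟨?_, ?_, ?_⟩, weight_factorization n hx0 hq2⟩
      · intro i hi
        by_contra h
        have hpos : 0 < x.factorization (Nat.nth Nat.Prime (i : ℕ)) := Nat.pos_of_ne_zero h
        have hdvd : Nat.nth Nat.Prime (i : ℕ) ∣ x := Nat.dvd_of_factorization_pos hpos.ne'
        have hle := hq3 _ (prime_nth _) hdvd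
        have hlt : Nat.nth Nat.Prime (i : ℕ) < Nat.nth Nat.Prime (v : ℕ) :=
          (Nat.nth_lt_nth Nat.infinite_setOf_prime).2 hi
        omega
      · rw [weight_factorization n hx0 hq2]
        have : (n : ℚ) < (x : ℚ) * (Nat.nth Nat.Prime (v : ℕ) : ℚ) :=
          (div_lt_iff₀ (by exact_mod_cast hpvpos)).1 hq1
        have h4 : n < x * Nat.nth Nat.Prime (v : ℕ) := by exact_mod_cast this
        exact lt_of_lt_of_eq h4 (mul_comm _ _)
      · rw [weight_factorization n hx0 hq2]
        exact hq2
    · rintro ⟨b, ⟨hb0, hb1, hb2⟩, rfl⟩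
      refine ⟨?_, hb2, ?_⟩
      · rw [div_lt_iff₀ (by exact_mod_cast hpvpos)]
        have h4 : n < weight b * Nat.nth Nat.Prime (v : ℕ) :=
          lt_of_lt_of_eq hb1 (mul_comm _ _)
        exact_mod_cast h4
      · intro q hq hdvd
        obtain ⟨i, hi, rfl⟩ := prime_dvd_weight hq hdvd
        have hvi : v ≤ i := by
          by_contra h
          push_neg at h
          rw [hb0 i h] at hi
          exact absurd hi (lt_irrefl 0)
        exact (Nat.nth_le_nth Nat.infinite_setOf_prime).2 hvi
  -- the log-inequality set
  have hlog : ∀ b : Fin (Nat.primeCounting n) →₀ ℕ,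
      ∑ i, (b i : ℝ) * Real.log (Nat.nth Nat.Prime (i : ℕ)) = Real.log (weight b) := by
    intro b
    rw [weight]
    push_cast
    rw [Real.log_prod (fun i _ => by
      have : (0 : ℝ) < (Nat.nth Nat.Prime (i : ℕ) : ℝ) ^ b i := by
        apply pow_pos
        exact_mod_cast (prime_nth (i : ℕ)).pos
      exact this.ne')]
    exact Finset.sum_congr rfl fun i _ => (Real.log_pow _ _).symm
  have hset3 : {b : Fin (Nat.primeCounting n) →₀ ℕ |
      (∀ i < v, b i = 0) ∧
      Real.log n - Real.log (Nat.nth Nat.Prime (v : ℕ)) <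
        ∑ i, (b i : ℝ) * Real.log (Nat.nth Nat.Prime (i : ℕ)) ∧
      ∑ i, (b i : ℝ) * Real.log (Nat.nth Nat.Prime (i : ℕ)) ≤ Real.log n} = B0 := by
    ext b
    have hw : (0 : ℝ) < (weight b : ℝ) := by exact_mod_cast one_le_weight b
    have hnR : (0 : ℝ) < (n : ℝ) := by exact_mod_cast hn
    have hpR : (0 : ℝ) < (Nat.nth Nat.Prime (v : ℕ) : ℝ) := by exact_mod_cast hpvpos
    have key1 : (Real.log n - Real.log (Nat.nth Nat.Prime (v : ℕ)) <
        ∑ i, (b i : ℝ) * Real.log (Nat.nth Nat.Prime (i : ℕ)))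
        ↔ n < Nat.nth Nat.Prime (v : ℕ) * weight b := by
      rw [hlog, sub_lt_iff_lt_add, ← Real.log_mul hw.ne' hpR.ne']
      rw [show (weight b : ℝ) * (Nat.nth Nat.Prime (v : ℕ) : ℝ)
          = ((Nat.nth Nat.Prime (v : ℕ) * weight b : ℕ) : ℝ) by push_cast; ring]
      rw [Real.log_lt_log_iff hnR (by
        exact_mod_cast Nat.mul_pos hpvpos (lt_of_lt_of_le Nat.zero_lt_one (one_le_weight b)))]
      exact Nat.cast_lt
    have key2 : (∑ i, (b i : ℝ) * Real.log (Nat.nth Nat.Prime (i : ℕ)) ≤ Real.log n)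
        ↔ weight b ≤ n := by
      rw [hlog, Real.log_le_log_iff hw hnR]
      exact Nat.cast_le
    constructor
    · rintro ⟨h1, h2, h3⟩
      exact ⟨h1, key1.1 h2, key2.1 h3⟩
    · rintro ⟨h1, h2, h3⟩
      exact ⟨h1, key1.2 h2, key2.2 h3⟩
  have hinj1 : Function.Injective
      (fun b : Fin (Nat.primeCounting n) →₀ ℕ => b + Finsupp.single v 1) := by
    intro a b h
    ext i
    have := DFunLike.congr_fun h i
    simp only [Finsupp.add_apply] at this
    omega
  constructor
  · rw [hset1, hsetX, Set.ncard_image_of_injective _ hinj1,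
      Set.ncard_image_of_injective _ weight_injective]
  · rw [hsetX, hset3, Set.ncard_image_of_injective _ weight_injective]
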